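/- arXiv:2604.05298 — 2 statements merged into one kernel-verified Lean document; each statement's English description precedes it below -/
import Mathlib

section
/- Let Δ(τ) = E[(1 − γ·1{Θ_τ < 1})·(F(Θ_τ) − Θ_τ)] where Θ_τ = ατ + σ√α Z, Z ~ N(0,1), α = 1/(1+σ²), γ ∈ (0,1), and F(θ) = 1 for θ ≤ 1, F(θ) = Φ((τ−θ)/σ) for θ > 1. If σ² < 2π then Δ is strictly decreasing on ℝ. -/
/-!
For fixed `z` the integrand of `Δ` is strictly decreasing in `τ`, since `Θ_τ` increases with slope
`α`. On `Θ ≤ 1` it equals `(1 - γ·1{Θ < 1})(1 - Θ)`, which is nonnegative and decreasing; on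
`Θ > 1` it equals `Φ((τ - Θ)/σ) - Θ < 0`, whose argument moves with slope `σα`. As `Φ` is
`(2π)^{-1/2}`-Lipschitz, `Φ` gains at most `|σ|α/√(2π) < α` per unit of `τ` when `σ² < 2π`, which
the term `-Θ` outweighs. A strict pointwise inequality survives integration against `N(0,1)`.
-/

open MeasureTheory ProbabilityTheory Filter

noncomputable def stdPDF (x : ℝ) : ℝ := (Real.sqrt (2 * Real.pi))⁻¹ * Real.exp (-x ^ 2 / 2)

noncomputable def stdCDF (x : ℝ) : ℝ := ∫ t in Set.Iic x, stdPDF t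

/-- Posterior representation Θ_τ = ατ + σ√α z with α = 1/(1+σ²). -/
noncomputable def thetaPost (σ τ z : ℝ) : ℝ :=
  (1 / (1 + σ ^ 2)) * τ + σ * Real.sqrt (1 / (1 + σ ^ 2)) * z

/-- Ex-post aggregate action: F(θ) = 1 for θ ≤ 1 and Φ((τ−θ)/σ) for θ > 1. -/
noncomputable def Fagg (σ τ θ : ℝ) : ℝ := if θ ≤ 1 then 1 else stdCDF ((τ - θ) / σ)

/-- Two-stage indifference function Δ(τ) = E[(1 − γ1{Θ_τ<1})(F(Θ_τ) − Θ_τ)], Z ~ N(0,1). -/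
noncomputable def Δ (σ γ τ : ℝ) : ℝ :=
  ∫ z, (1 - γ * (if thetaPost σ τ z < 1 then (1 : ℝ) else 0)) *
      (Fagg σ τ (thetaPost σ τ z) - thetaPost σ τ z) ∂(gaussianReal 0 1)

lemma stdPDF_eq_gaussianPDFReal : stdPDF = gaussianPDFReal 0 1 := by
  ext x
  simp [stdPDF, gaussianPDFReal]

lemma stdPDF_le_inv_sqrt_two_pi (x : ℝ) : stdPDF x ≤ (Real.sqrt (2 * Real.pi))⁻¹ := by
  have hexp : Real.exp (-x ^ 2 / 2) ≤ 1 := Real.exp_le_one_iff.2 (by nlinarith [sq_nonneg x])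
  simpa [stdPDF] using mul_le_mul_of_nonneg_left hexp (by positivity : (0 : ℝ) ≤ _)

lemma stdCDF_eq_cdf : stdCDF = cdf (gaussianReal 0 1) := by
  ext x
  rw [cdf_eq_real, measureReal_def, gaussianReal_apply_eq_integral 0 one_ne_zero,
    ENNReal.toReal_ofReal (setIntegral_nonneg measurableSet_Iic
      fun t _ => gaussianPDFReal_nonneg 0 1 t), stdCDF, stdPDF_eq_gaussianPDFReal]

lemma abs_stdCDF_sub_le (a b : ℝ) :
    |stdCDF b - stdCDF a| ≤ (Real.sqrt (2 * Real.pi))⁻¹ * |b - a| := by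
  have hint : Integrable stdPDF := stdPDF_eq_gaussianPDFReal ▸ integrable_gaussianPDFReal 0 1
  rw [stdCDF, stdCDF, intervalIntegral.integral_Iic_sub_Iic hint.integrableOn hint.integrableOn]
  refine intervalIntegral.norm_integral_le_of_norm_le_const (f := stdPDF) fun x _ => ?_
  rw [Real.norm_eq_abs, abs_of_nonneg (stdPDF_eq_gaussianPDFReal ▸ gaussianPDFReal_nonneg 0 1 x)]
  exact stdPDF_le_inv_sqrt_two_pi x

lemma measurable_stdCDF : Measurable stdCDF :=
  stdCDF_eq_cdf ▸ (monotone_cdf _).measurable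

lemma abs_stdCDF_le_one (x : ℝ) : |stdCDF x| ≤ 1 := by
  rw [stdCDF_eq_cdf, abs_of_nonneg (cdf_nonneg _ x)]
  exact cdf_le_one _ x

lemma integral_lt_integral_of_forall_lt {α : Type*} [MeasurableSpace α] {μ : Measure α} [NeZero μ]
    {f g : α → ℝ} (hf : Integrable f μ) (hg : Integrable g μ) (h : ∀ x, f x < g x) :
    ∫ x, f x ∂μ < ∫ x, g x ∂μ := by
  have hpos : ∀ x, 0 < g x - f x := fun x => sub_pos.2 (h x)
  rw [← sub_pos, ← integral_sub hg hf,
    integral_pos_iff_support_of_nonneg (fun x => (hpos x).le) (hg.sub hf),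
    Function.support_eq_univ fun x => (hpos x).ne']
  exact Measure.measure_univ_pos.2 (NeZero.ne μ)

/-- `Δ σ γ τ` unfolds to `∫ z, payoff σ γ τ (thetaPost σ τ z) ∂gaussianReal 0 1`. -/
noncomputable def payoff (σ γ τ θ : ℝ) : ℝ :=
  (1 - γ * (if θ < 1 then (1 : ℝ) else 0)) * (Fagg σ τ θ - θ)

section payoff

variable {σ γ τ τ₁ τ₂ θ θ₁ θ₂ : ℝ}

lemma payoff_of_lt_one (h : θ < 1) : payoff σ γ τ θ = (1 - γ) * (1 - θ) := by
  simp [payoff, Fagg, h, h.le]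

lemma payoff_one : payoff σ γ τ 1 = 0 := by
  simp [payoff, Fagg]

lemma payoff_of_one_lt (h : 1 < θ) : payoff σ γ τ θ = stdCDF ((τ - θ) / σ) - θ := by
  simp [payoff, Fagg, h.not_ge, h.not_gt]

lemma payoff_nonneg_of_le_one (hγ : γ ≤ 1) (h : θ ≤ 1) : 0 ≤ payoff σ γ τ θ := by
  rcases h.lt_or_eq with h | rfl
  · rw [payoff_of_lt_one h]
    exact mul_nonneg (by linarith) (by linarith)
  · rw [payoff_one]

lemma payoff_neg_of_one_lt (h : 1 < θ) : payoff σ γ τ θ < 0 := by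
  rw [payoff_of_one_lt h]
  linarith [(abs_le.1 (abs_stdCDF_le_one ((τ - θ) / σ))).2]

lemma payoff_lt_payoff_of_le_one (hγ : γ < 1) (hθ : θ₁ < θ₂) (h₂ : θ₂ ≤ 1) :
    payoff σ γ τ₂ θ₂ < payoff σ γ τ₁ θ₁ := by
  rw [payoff_of_lt_one (hθ.trans_le h₂)]
  rcases h₂.lt_or_eq with h₂ | rfl
  · rw [payoff_of_lt_one h₂]
    nlinarith
  · rw [payoff_one]
    exact mul_pos (by linarith) (by linarith)

lemma payoff_lt_payoff_of_one_lt (hσ : σ ^ 2 < 2 * Real.pi) (hτ : τ₁ < τ₂) (h₁ : 1 < θ₁)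
    (hθ : θ₂ - θ₁ = (τ₂ - τ₁) / (1 + σ ^ 2)) : payoff σ γ τ₂ θ₂ < payoff σ γ τ₁ θ₁ := by
  have hd : 0 < θ₂ - θ₁ := hθ ▸ div_pos (sub_pos.2 hτ) (by positivity)
  rw [payoff_of_one_lt h₁, payoff_of_one_lt (by linarith)]
  have hu : (τ₂ - θ₂) / σ - (τ₁ - θ₁) / σ = σ * (θ₂ - θ₁) := by
    rcases eq_or_ne σ 0 with rfl | hσ0
    · simp
    · have hτθ : τ₂ - τ₁ = (1 + σ ^ 2) * (θ₂ - θ₁) := by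
        rw [hθ]
        field_simp
      rw [← sub_div, div_eq_iff hσ0]
      linear_combination hτθ
  have hslope : (Real.sqrt (2 * Real.pi))⁻¹ * |σ| < 1 := by
    rw [inv_mul_lt_one₀ (by positivity), Real.lt_sqrt (abs_nonneg σ), sq_abs]
    exact hσ
  have hlip := abs_stdCDF_sub_le ((τ₁ - θ₁) / σ) ((τ₂ - θ₂) / σ)
  rw [hu, abs_mul, abs_of_pos hd, ← mul_assoc] at hlip
  linarith [le_abs_self (stdCDF ((τ₂ - θ₂) / σ) - stdCDF ((τ₁ - θ₁) / σ)),
    mul_lt_of_lt_one_left hd hslope]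

lemma thetaPost_sub (σ τ₁ τ₂ z : ℝ) :
    thetaPost σ τ₂ z - thetaPost σ τ₁ z = (τ₂ - τ₁) / (1 + σ ^ 2) := by
  simp only [thetaPost]
  ring

lemma strictAnti_payoff_thetaPost (hγ : γ < 1) (hσ : σ ^ 2 < 2 * Real.pi) (z : ℝ) :
    StrictAnti fun τ => payoff σ γ τ (thetaPost σ τ z) := by
  intro τ₁ τ₂ hτ
  have hθ := thetaPost_sub σ τ₁ τ₂ z
  have hlt : thetaPost σ τ₁ z < thetaPost σ τ₂ z := by
    linarith [div_pos (sub_pos.2 hτ) (by positivity : (0 : ℝ) < 1 + σ ^ 2)]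
  rcases le_or_gt (thetaPost σ τ₂ z) 1 with h₂ | h₂
  · exact payoff_lt_payoff_of_le_one hγ hlt h₂
  rcases le_or_gt (thetaPost σ τ₁ z) 1 with h₁ | h₁
  · exact (payoff_neg_of_one_lt h₂).trans_le (payoff_nonneg_of_le_one hγ.le h₁)
  · exact payoff_lt_payoff_of_one_lt hσ hτ h₁ hθ

lemma integrable_payoff_comp {α : Type*} [MeasurableSpace α] {μ : Measure α} [IsFiniteMeasure μ]
    {f : α → ℝ} (hf : Integrable f μ) : Integrable (fun x => payoff σ γ τ (f x)) μ := by
  have hF : Measurable (Fagg σ τ) :=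
    Measurable.ite measurableSet_Iic measurable_const (measurable_stdCDF.comp (by fun_prop))
  have hFf : Integrable (fun x => Fagg σ τ (f x)) μ := by
    refine Integrable.of_bound (hF.comp_aemeasurable hf.aemeasurable).aestronglyMeasurable 1
      (ae_of_all _ fun x => ?_)
    unfold Fagg
    split_ifs
    · simp
    · exact abs_stdCDF_le_one _
  have hind : Measurable fun θ : ℝ => 1 - γ * (if θ < 1 then (1 : ℝ) else 0) :=
    measurable_const.sub
      ((Measurable.ite measurableSet_Iio measurable_const measurable_const).const_mul γ)
  refine (hFf.sub hf).bdd_mul (c := 1 + |γ|)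
    (hind.comp_aemeasurable hf.aemeasurable).aestronglyMeasurable (ae_of_all _ fun x => ?_)
  split_ifs
  · simpa using abs_sub (1 : ℝ) γ
  · simp

end payoff

lemma integrable_thetaPost (σ τ : ℝ) : Integrable (thetaPost σ τ) (gaussianReal 0 1) :=
  (integrable_const _).add (((memLp_id_gaussianReal 1).integrable le_rfl).const_mul _)

theorem stmt5_general (σ γ : ℝ) (hσ' : σ ^ 2 < 2 * Real.pi)
    (hγ : γ ∈ Set.Ioo (0 : ℝ) 1) :
    StrictAnti (Δ σ γ) := fun _ _ hτ =>
  integral_lt_integral_of_forall_lt (integrable_payoff_comp (integrable_thetaPost σ _))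
    (integrable_payoff_comp (integrable_thetaPost σ _))
    fun z => strictAnti_payoff_thetaPost hγ.2 hσ' z hτ

/-- If σ² < 2π then Δ is strictly decreasing on ℝ. -/
theorem stmt5 (σ γ : ℝ) (hσ : 0 < σ) (hσ' : σ ^ 2 < 2 * Real.pi)
    (hγ : γ ∈ Set.Ioo (0 : ℝ) 1) :
    StrictAnti (Δ σ γ) :=
  stmt5_general σ γ hσ' hγ
end

section
/- The τ-derivative of the two-stage welfare satisfies dW₂/dτ(τ,σ,γ) = f_Y(τ)·[Δ₂(τ,σ,γ) + ∫_1^∞ Φ((τ−θ)/σ) f(θ|Y=τ) dθ], where f_Y is the marginal density of Y = Θ + Z; hence W₂ is strictly increasing in τ on any interval where Δ₂(τ,σ,γ) > 0. -/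
open MeasureTheory ProbabilityTheory Filter

/-- Posterior density of Θ given Y = τ: Gaussian with mean ατ, variance ασ², α = 1/(1+σ²). -/
noncomputable def postPDF (σ τ θ : ℝ) : ℝ :=
  (Real.sqrt ((1 / (1 + σ ^ 2)) * σ ^ 2))⁻¹ *
    stdPDF ((θ - (1 / (1 + σ ^ 2)) * τ) / Real.sqrt ((1 / (1 + σ ^ 2)) * σ ^ 2))

/-- Two-stage indifference function. -/
noncomputable def Δ₂ (σ γ τ : ℝ) : ℝ :=
  (∫ θ in Set.Iic (1 : ℝ), (1 - γ) * (1 - θ) * postPDF σ τ θ) +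
    ∫ θ in Set.Ioi (1 : ℝ), (stdCDF ((τ - θ) / σ) - θ) * postPDF σ τ θ

/-- Single-stage indifference function. -/
noncomputable def Δ₁ (σ τ : ℝ) : ℝ :=
  ∫ θ, (stdCDF ((τ - θ) / σ) - θ) * postPDF σ τ θ

/-- First-stage participation fraction. -/
noncomputable def F1 (σ τ θ : ℝ) : ℝ := stdCDF ((τ - θ) / σ)

/-- Two-stage welfare. -/
noncomputable def W₂ (σ γ τ : ℝ) : ℝ :=
  (∫ θ in Set.Iic (1 : ℝ), (F1 σ τ θ + γ * (1 - F1 σ τ θ)) * (1 - θ) * stdPDF θ) +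
    ∫ θ in Set.Ioi (1 : ℝ), F1 σ τ θ * (F1 σ τ θ - θ) * stdPDF θ

/-- Single-stage welfare. -/
noncomputable def W₁ (σ τ : ℝ) : ℝ :=
  ∫ θ, F1 σ τ θ * (F1 σ τ θ - θ) * stdPDF θ

/-- Marginal density of Y = Θ + Z. -/
noncomputable def fY (σ τ : ℝ) : ℝ :=
  (Real.sqrt (1 + σ ^ 2))⁻¹ * stdPDF (τ / Real.sqrt (1 + σ ^ 2))

lemma stdPDF_pos (x : ℝ) : 0 < stdPDF x := by
  rw [stdPDF_eq_gaussianPDFReal]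
  exact gaussianPDFReal_pos _ _ _ one_ne_zero

lemma stdPDF_le_one (x : ℝ) : stdPDF x ≤ 1 := by
  have hsqrt : 1 ≤ Real.sqrt (2 * Real.pi) := Real.one_le_sqrt.2 (by linarith [Real.pi_gt_three])
  have hexp : Real.exp (-x ^ 2 / 2) ≤ 1 := Real.exp_le_one_iff.2 (by nlinarith [sq_nonneg x])
  calc stdPDF x ≤ 1 * 1 :=
        mul_le_mul (inv_le_one_of_one_le₀ hsqrt) hexp (Real.exp_nonneg _) zero_le_one
    _ = 1 := one_mul 1

@[fun_prop]
lemma continuous_stdPDF : Continuous stdPDF := by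
  unfold stdPDF
  fun_prop

lemma integrable_stdPDF : Integrable stdPDF :=
  stdPDF_eq_gaussianPDFReal ▸ integrable_gaussianPDFReal 0 1

lemma integrable_one_add_abs_mul_stdPDF : Integrable fun x => (1 + |x|) * stdPDF x := by
  have hmoment : Integrable fun x : ℝ => |x| * stdPDF x := by
    refine ((integrable_mul_exp_neg_mul_sq (b := 1 / 2) (by norm_num)).norm.const_mul
      (Real.sqrt (2 * Real.pi))⁻¹).congr (.of_forall fun x => ?_)
    simp only [norm_mul, Real.norm_eq_abs, abs_of_pos (Real.exp_pos _), stdPDF]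
    ring_nf
  refine (integrable_stdPDF.add hmoment).congr (.of_forall fun x => ?_)
  simp only [Pi.add_apply]
  ring

lemma integrable_mul_stdPDF_of_abs_le {f : ℝ → ℝ} (hf : AEStronglyMeasurable f) {C : ℝ}
    (hC : ∀ x, |f x| ≤ C * (1 + |x|)) : Integrable fun x => f x * stdPDF x := by
  refine (integrable_one_add_abs_mul_stdPDF.const_mul C).mono'
    (hf.mul continuous_stdPDF.aestronglyMeasurable) (.of_forall fun x => ?_)
  rw [norm_mul, Real.norm_eq_abs, Real.norm_eq_abs, abs_of_pos (stdPDF_pos x), ← mul_assoc]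
  exact mul_le_mul_of_nonneg_right (hC x) (stdPDF_pos x).le

lemma stdCDF_nonneg (x : ℝ) : 0 ≤ stdCDF x :=
  setIntegral_nonneg measurableSet_Iic fun t _ => (stdPDF_pos t).le

lemma stdCDF_le_one (x : ℝ) : stdCDF x ≤ 1 := by
  have htotal : ∫ t, stdPDF t = 1 := by
    rw [stdPDF_eq_gaussianPDFReal]
    exact integral_gaussianPDFReal_eq_one 0 one_ne_zero
  rw [← htotal]
  exact setIntegral_le_integral integrable_stdPDF (.of_forall fun t => (stdPDF_pos t).le)

lemma hasDerivAt_stdCDF (x : ℝ) : HasDerivAt stdCDF (stdPDF x) x := by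
  have hsplit : ∀ y, stdCDF y = stdCDF 0 + ∫ t in (0 : ℝ)..y, stdPDF t := fun y => by
    rw [← intervalIntegral.integral_Iic_sub_Iic integrable_stdPDF.integrableOn
      integrable_stdPDF.integrableOn, stdCDF, stdCDF, add_sub_cancel]
  refine HasDerivAt.congr_of_eventuallyEq ?_ (.of_forall hsplit)
  exact (intervalIntegral.integral_hasDerivAt_right integrable_stdPDF.intervalIntegrable
    continuous_stdPDF.aestronglyMeasurable.stronglyMeasurableAtFilter
    continuous_stdPDF.continuousAt).const_add _

@[fun_prop]
lemma continuous_stdCDF : Continuous stdCDF :=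
  continuous_iff_continuousAt.2 fun x => (hasDerivAt_stdCDF x).continuousAt

lemma stdCDF_mem_Icc (x : ℝ) : stdCDF x ∈ Set.Icc (0 : ℝ) 1 :=
  ⟨stdCDF_nonneg x, stdCDF_le_one x⟩

lemma hasDerivAt_stdCDF_sub_div (σ θ x : ℝ) :
    HasDerivAt (fun x => stdCDF ((x - θ) / σ)) (σ⁻¹ * stdPDF ((x - θ) / σ)) x := by
  have hinner : HasDerivAt (fun x : ℝ => (x - θ) / σ) σ⁻¹ x := by
    simpa only [one_div] using ((hasDerivAt_id' x).sub_const θ).div_const σ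
  exact ((hasDerivAt_stdCDF _).comp x hinner).congr_deriv (mul_comm _ _)

lemma fY_pos {σ : ℝ} (hσ : 0 < σ) (τ : ℝ) : 0 < fY σ τ :=
  mul_pos (inv_pos.2 (Real.sqrt_pos.2 (by positivity))) (stdPDF_pos _)

lemma postPDF_nonneg (σ τ θ : ℝ) : 0 ≤ postPDF σ τ θ :=
  mul_nonneg (inv_nonneg.2 (Real.sqrt_nonneg _)) (stdPDF_pos _).le

@[fun_prop]
lemma continuous_postPDF (σ τ : ℝ) : Continuous (postPDF σ τ) := by
  unfold postPDF
  fun_prop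

/-- Bayes' rule for `Y = Θ + Z`; the exponents agree by completing the square in `θ`. -/
lemma fY_mul_postPDF {σ : ℝ} (hσ : 0 < σ) (τ θ : ℝ) :
    fY σ τ * postPDF σ τ θ = σ⁻¹ * stdPDF ((τ - θ) / σ) * stdPDF θ := by
  have hc : (0 : ℝ) < 1 + σ ^ 2 := by positivity
  unfold fY postPDF stdPDF
  set s := Real.sqrt ((1 / (1 + σ ^ 2)) * σ ^ 2) with hs_def
  set r := Real.sqrt (1 + σ ^ 2) with hr_def
  have hs2 : s ^ 2 = (1 / (1 + σ ^ 2)) * σ ^ 2 := Real.sq_sqrt (by positivity)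
  have hr2 : r ^ 2 = 1 + σ ^ 2 := Real.sq_sqrt hc.le
  have hs : 0 < s := Real.sqrt_pos.2 (by positivity)
  have hr : 0 < r := Real.sqrt_pos.2 hc
  have hrs : r * s = σ := by
    rw [hr_def, hs_def, ← Real.sqrt_mul hc.le,
      show (1 + σ ^ 2) * (1 / (1 + σ ^ 2) * σ ^ 2) = σ ^ 2 by field_simp, Real.sqrt_sq hσ.le]
  have hexp : Real.exp (-((τ - θ) / σ) ^ 2 / 2) * Real.exp (-θ ^ 2 / 2)
      = Real.exp (-(τ / r) ^ 2 / 2) * Real.exp (-((θ - 1 / (1 + σ ^ 2) * τ) / s) ^ 2 / 2) := by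
    rw [← Real.exp_add, ← Real.exp_add, div_pow, div_pow, div_pow, hs2, hr2]
    congr 1
    field_simp
    ring
  rw [show σ⁻¹ = r⁻¹ * s⁻¹ by rw [← mul_inv, hrs]]
  linear_combination
    -(r⁻¹ * s⁻¹ * (Real.sqrt (2 * Real.pi))⁻¹ * (Real.sqrt (2 * Real.pi))⁻¹) * hexp

lemma postPDF_le {σ : ℝ} (hσ : 0 < σ) (τ θ : ℝ) :
    postPDF σ τ θ ≤ (σ * fY σ τ)⁻¹ * stdPDF θ := by
  have hfY := fY_pos hσ τ
  calc postPDF σ τ θ = (fY σ τ)⁻¹ * (σ⁻¹ * stdPDF ((τ - θ) / σ) * stdPDF θ) := by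
        rw [← fY_mul_postPDF hσ, inv_mul_cancel_left₀ hfY.ne']
    _ ≤ (fY σ τ)⁻¹ * (σ⁻¹ * 1 * stdPDF θ) := by
        gcongr
        exacts [(stdPDF_pos θ).le, stdPDF_le_one _]
    _ = (σ * fY σ τ)⁻¹ * stdPDF θ := by
        rw [mul_inv]
        ring

lemma integrable_mul_postPDF_of_abs_le {σ : ℝ} (hσ : 0 < σ) (τ : ℝ) {f : ℝ → ℝ}
    (hf : AEStronglyMeasurable f) {C : ℝ} (hC : ∀ θ, |f θ| ≤ C * (1 + |θ|)) :
    Integrable fun θ => f θ * postPDF σ τ θ := by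
  refine (integrable_one_add_abs_mul_stdPDF.const_mul (C * (σ * fY σ τ)⁻¹)).mono'
    (hf.mul (continuous_postPDF σ τ).aestronglyMeasurable) (.of_forall fun θ => ?_)
  rw [norm_mul, Real.norm_eq_abs, Real.norm_eq_abs, abs_of_nonneg (postPDF_nonneg σ τ θ)]
  calc |f θ| * postPDF σ τ θ ≤ C * (1 + |θ|) * ((σ * fY σ τ)⁻¹ * stdPDF θ) :=
        mul_le_mul (hC θ) (postPDF_le hσ τ θ) (postPDF_nonneg σ τ θ)
          ((abs_nonneg _).trans (hC θ))
    _ = C * (σ * fY σ τ)⁻¹ * ((1 + |θ|) * stdPDF θ) := by ring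

theorem hasDerivAt_setIntegral_stdCDF_comp {σ : ℝ} (hσ : 0 < σ) (s : Set ℝ) {q q' : ℝ → ℝ → ℝ}
    (hq : Continuous fun p : ℝ × ℝ => q p.1 p.2) (hq' : Continuous fun p : ℝ × ℝ => q' p.1 p.2)
    (hderiv : ∀ c θ, HasDerivAt (q · θ) (q' c θ) c) {C : ℝ}
    (hbound : ∀ c ∈ Set.Icc (0 : ℝ) 1, ∀ θ, |q c θ| ≤ C * (1 + |θ|))
    (hbound' : ∀ c ∈ Set.Icc (0 : ℝ) 1, ∀ θ, |q' c θ| ≤ C * (1 + |θ|)) (τ : ℝ) :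
    HasDerivAt (fun x => ∫ θ in s, q (stdCDF ((x - θ) / σ)) θ * stdPDF θ)
      (fY σ τ * ∫ θ in s, q' (stdCDF ((τ - θ) / σ)) θ * postPDF σ τ θ) τ := by
  have hcont : ∀ x, Continuous fun θ => q (stdCDF ((x - θ) / σ)) θ := fun x =>
    hq.comp (by fun_prop : Continuous fun θ => (stdCDF ((x - θ) / σ), θ))
  have hcont' : ∀ x, Continuous fun θ => q' (stdCDF ((x - θ) / σ)) θ := fun x =>
    hq'.comp (by fun_prop : Continuous fun θ => (stdCDF ((x - θ) / σ), θ))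
  have hint : Integrable fun θ => q (stdCDF ((τ - θ) / σ)) θ * stdPDF θ :=
    integrable_mul_stdPDF_of_abs_le (hcont τ).aestronglyMeasurable
      fun θ => hbound _ (stdCDF_mem_Icc _) θ
  have hdom : ∀ x θ, ‖q' (stdCDF ((x - θ) / σ)) θ * (σ⁻¹ * stdPDF ((x - θ) / σ) * stdPDF θ)‖
      ≤ C * σ⁻¹ * ((1 + |θ|) * stdPDF θ) := fun x θ => by
    have hq'xθ := hbound' _ (stdCDF_mem_Icc ((x - θ) / σ)) θ
    have hkernel : 0 ≤ σ⁻¹ * stdPDF ((x - θ) / σ) * stdPDF θ :=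
      mul_nonneg (mul_nonneg (inv_nonneg.2 hσ.le) (stdPDF_pos _).le) (stdPDF_pos θ).le
    rw [norm_mul, Real.norm_eq_abs, Real.norm_of_nonneg hkernel]
    calc |q' (stdCDF ((x - θ) / σ)) θ| * (σ⁻¹ * stdPDF ((x - θ) / σ) * stdPDF θ)
        ≤ C * (1 + |θ|) * (σ⁻¹ * 1 * stdPDF θ) := by
          refine mul_le_mul hq'xθ ?_ hkernel ((abs_nonneg _).trans hq'xθ)
          gcongr
          exacts [(stdPDF_pos θ).le, stdPDF_le_one _]
      _ = C * σ⁻¹ * ((1 + |θ|) * stdPDF θ) := by ring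
  have hdiff : ∀ x θ, HasDerivAt (fun x => q (stdCDF ((x - θ) / σ)) θ * stdPDF θ)
      (q' (stdCDF ((x - θ) / σ)) θ * (σ⁻¹ * stdPDF ((x - θ) / σ) * stdPDF θ)) x := fun x θ =>
    (((hderiv _ θ).comp x (hasDerivAt_stdCDF_sub_div σ θ x)).mul_const (stdPDF θ)).congr_deriv
      (by ring)
  refine (hasDerivAt_integral_of_dominated_loc_of_deriv_le univ_mem
    (.of_forall fun x => ((hcont x).mul continuous_stdPDF).aestronglyMeasurable) hint.restrict
    ((hcont' τ).mul (by fun_prop)).aestronglyMeasurable (.of_forall fun θ x _ => hdom x θ)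
    (integrable_one_add_abs_mul_stdPDF.const_mul _).restrict
    (.of_forall fun θ x _ => hdiff x θ)).2.congr_deriv ?_
  rw [← integral_const_mul]
  refine integral_congr_ae (.of_forall fun θ => ?_)
  simp only [← fY_mul_postPDF hσ]
  ring

lemma abs_sub_le_one_add_abs {c : ℝ} (hc : c ∈ Set.Icc (0 : ℝ) 1) (θ : ℝ) :
    |c - θ| ≤ 1 + |θ| := by
  have := abs_sub c θ
  rw [abs_of_nonneg hc.1] at this
  linarith [hc.2]

lemma hasDerivAt_setIntegral_Iic_welfare {σ : ℝ} (hσ : 0 < σ) (γ τ : ℝ) :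
    HasDerivAt (fun x => ∫ θ in Set.Iic (1 : ℝ),
        (stdCDF ((x - θ) / σ) + γ * (1 - stdCDF ((x - θ) / σ))) * (1 - θ) * stdPDF θ)
      (fY σ τ * ∫ θ in Set.Iic (1 : ℝ), (1 - γ) * (1 - θ) * postPDF σ τ θ) τ := by
  refine hasDerivAt_setIntegral_stdCDF_comp hσ _ (q := fun c θ => (c + γ * (1 - c)) * (1 - θ))
    (q' := fun _ θ => (1 - γ) * (1 - θ)) (C := 1 + |γ|) (by fun_prop) (by fun_prop)
    (fun c θ => ?_) (fun c hc θ => ?_) (fun c _ θ => ?_) τ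
  · exact ((((hasDerivAt_id' c).add (((hasDerivAt_const c 1).sub (hasDerivAt_id' c)).const_mul γ))
      ).mul_const (1 - θ)).congr_deriv (by ring)
  · have hcoef : |c + γ * (1 - c)| ≤ 1 + |γ| := abs_le.2
      ⟨by nlinarith [neg_abs_le γ, le_abs_self γ, hc.1, hc.2],
        by nlinarith [neg_abs_le γ, le_abs_self γ, hc.1, hc.2]⟩
    rw [abs_mul]
    exact mul_le_mul hcoef (abs_sub_le_one_add_abs ⟨zero_le_one, le_rfl⟩ θ) (abs_nonneg _)
      (by positivity)
  · rw [abs_mul]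
    exact mul_le_mul (abs_sub_le_one_add_abs ⟨zero_le_one, le_rfl⟩ γ)
      (abs_sub_le_one_add_abs ⟨zero_le_one, le_rfl⟩ θ) (abs_nonneg _) (by positivity)

lemma hasDerivAt_setIntegral_Ioi_welfare {σ : ℝ} (hσ : 0 < σ) (τ : ℝ) :
    HasDerivAt (fun x => ∫ θ in Set.Ioi (1 : ℝ),
        stdCDF ((x - θ) / σ) * (stdCDF ((x - θ) / σ) - θ) * stdPDF θ)
      (fY σ τ * ∫ θ in Set.Ioi (1 : ℝ),
        (stdCDF ((τ - θ) / σ) - θ + stdCDF ((τ - θ) / σ)) * postPDF σ τ θ) τ := by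
  refine hasDerivAt_setIntegral_stdCDF_comp hσ _ (q := fun c θ => c * (c - θ))
    (q' := fun c θ => c - θ + c) (C := 2) (by fun_prop) (by fun_prop)
    (fun c θ => ?_) (fun c hc θ => ?_) (fun c hc θ => ?_) τ
  · exact ((hasDerivAt_id' c).mul ((hasDerivAt_id' c).sub_const θ)).congr_deriv (by ring)
  · rw [abs_mul, abs_of_nonneg hc.1]
    nlinarith [abs_sub_le_one_add_abs hc θ, abs_nonneg (c - θ), abs_nonneg θ, hc.2]
  · have := abs_add_le (c - θ) c
    rw [abs_of_nonneg hc.1] at this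
    nlinarith [abs_sub_le_one_add_abs hc θ, abs_nonneg θ, hc.2]

lemma integral_Ioi_add_mul_postPDF {σ : ℝ} (hσ : 0 < σ) (τ : ℝ) :
    ∫ θ in Set.Ioi (1 : ℝ), (stdCDF ((τ - θ) / σ) - θ + stdCDF ((τ - θ) / σ)) * postPDF σ τ θ
      = (∫ θ in Set.Ioi (1 : ℝ), (stdCDF ((τ - θ) / σ) - θ) * postPDF σ τ θ) +
        ∫ θ in Set.Ioi (1 : ℝ), stdCDF ((τ - θ) / σ) * postPDF σ τ θ := by
  have hintegrable : ∀ f : ℝ → ℝ, Continuous f → (∀ θ, |f θ| ≤ 1 * (1 + |θ|)) →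
      IntegrableOn (fun θ => f θ * postPDF σ τ θ) (Set.Ioi 1) := fun f hf hfC =>
    (integrable_mul_postPDF_of_abs_le hσ τ hf.aestronglyMeasurable hfC).integrableOn
  simp only [add_mul]
  refine integral_add (hintegrable _ (by fun_prop) fun θ => ?_)
    (hintegrable _ (by fun_prop) fun θ => ?_)
  · rw [one_mul]
    exact abs_sub_le_one_add_abs (stdCDF_mem_Icc _) θ
  · rw [one_mul, abs_of_nonneg (stdCDF_nonneg _)]
    linarith [stdCDF_le_one ((τ - θ) / σ), abs_nonneg θ]

lemma hasDerivAt_W₂ {σ : ℝ} (hσ : 0 < σ) (γ τ : ℝ) :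
    HasDerivAt (fun t => W₂ σ γ t)
      (fY σ τ * (Δ₂ σ γ τ + ∫ θ in Set.Ioi (1 : ℝ), stdCDF ((τ - θ) / σ) * postPDF σ τ θ)) τ := by
  refine ((hasDerivAt_setIntegral_Iic_welfare hσ γ τ).add
    (hasDerivAt_setIntegral_Ioi_welfare hσ τ)).congr_deriv ?_
  rw [integral_Ioi_add_mul_postPDF hσ, Δ₂]
  ring

theorem stmt14_general (σ γ : ℝ) (hσ : 0 < σ) :
    (∀ τ : ℝ, HasDerivAt (fun t => W₂ σ γ t)
      (fY σ τ * (Δ₂ σ γ τ + ∫ θ in Set.Ioi (1 : ℝ), stdCDF ((τ - θ) / σ) * postPDF σ τ θ)) τ) ∧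
    (∀ a b : ℝ, a < b → (∀ τ ∈ Set.Icc a b, 0 < Δ₂ σ γ τ) → W₂ σ γ a < W₂ σ γ b) := by
  refine ⟨hasDerivAt_W₂ hσ γ, fun a b hab hΔ => ?_⟩
  refine strictMonoOn_of_deriv_pos (convex_Icc a b)
    (fun x _ => (hasDerivAt_W₂ hσ γ x).continuousAt.continuousWithinAt) (fun τ hτ => ?_)
    ⟨le_rfl, hab.le⟩ ⟨hab.le, le_rfl⟩ hab
  rw [interior_Icc] at hτ
  have hnonneg : 0 ≤ ∫ θ in Set.Ioi (1 : ℝ), stdCDF ((τ - θ) / σ) * postPDF σ τ θ :=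
    setIntegral_nonneg measurableSet_Ioi fun θ _ =>
      mul_nonneg (stdCDF_nonneg _) (postPDF_nonneg σ τ θ)
  rw [(hasDerivAt_W₂ hσ γ τ).deriv]
  exact mul_pos (fY_pos hσ τ) (add_pos_of_pos_of_nonneg (hΔ τ (Set.Ioo_subset_Icc_self hτ)) hnonneg)

/-- dW₂/dτ = f_Y(τ)[Δ₂(τ,σ,γ) + ∫_1^∞ Φ((τ−θ)/σ) f(θ|Y=τ) dθ]; hence W₂ is strictly
increasing in τ on any interval where Δ₂ > 0. -/
theorem stmt14 (σ γ : ℝ) (hσ : 0 < σ) (hγ : γ ∈ Set.Ioo (0 : ℝ) 1) :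
    (∀ τ : ℝ, HasDerivAt (fun t => W₂ σ γ t)
      (fY σ τ * (Δ₂ σ γ τ + ∫ θ in Set.Ioi (1 : ℝ), stdCDF ((τ - θ) / σ) * postPDF σ τ θ)) τ) ∧
    (∀ a b : ℝ, a < b → (∀ τ ∈ Set.Icc a b, 0 < Δ₂ σ γ τ) → W₂ σ γ a < W₂ σ γ b) :=
  stmt14_general σ γ hσ
end
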